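/- For the isotropic case λ = μ = 1 and z ∈ ℝ² with 0 < |z| < 1, let z̄ := z/|z|² be the reflection of z across the unit circle and k(x;w) := (b/2π) Jᵀ(x−w)/|x−w|² with J = [[0,1],[−1,0]]. Then for a single dislocation in the unit disk, the Peach-Köhler force j(z) := −b J k(z; z̄) equals (b²/2π) · z/(1 − |z|²); in particular it is directed radially outward and its magnitude tends to ∞ as |z| → 1⁻. -/

import Mathlib

open Filter

/-- Rotation by `−π/2`: `J v = (v₂, −v₁)`. -/
noncomputable def Jrot (v : EuclideanSpace ℝ (Fin 2)) : EuclideanSpace ℝ (Fin 2) :=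
  WithLp.toLp 2 ![v 1, -v 0]

/-- `Jᵀ v = (−v₂, v₁)`. -/
noncomputable def JTrot (v : EuclideanSpace ℝ (Fin 2)) : EuclideanSpace ℝ (Fin 2) :=
  WithLp.toLp 2 ![-(v 1), v 0]

/-- Isotropic fundamental strain `k(x;w) = (b/2π) Jᵀ(x−w)/|x−w|²`. -/
noncomputable def kIso (b : ℝ) (x w : EuclideanSpace ℝ (Fin 2)) :
    EuclideanSpace ℝ (Fin 2) :=
  (b / (2 * Real.pi) / ‖x - w‖ ^ 2) • JTrot (x - w)

/-- Peach–Köhler force on a single dislocation `z` in the unit disk: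
`j(z) = −b J k(z; z̄)` with `z̄ = z/|z|²`. -/
noncomputable def jDisk (b : ℝ) (z : EuclideanSpace ℝ (Fin 2)) :
    EuclideanSpace ℝ (Fin 2) :=
  (-b) • Jrot (kIso b z ((‖z‖ ^ 2)⁻¹ • z))


/-!
Since `J Jᵀ = 1`, the force is `−(b²/2π) (z − z̄)/|z − z̄|²`, and `z − z̄ = (1 − |z|⁻²) z` is a
real multiple of `z`; simplifying the scalar gives `(b²/2π)/(1 − |z|²)`, which is positive inside
the disk and blows up like `1/(1 − |z|)` at its boundary.
-/

open Topology

lemma Jrot_smul (c : ℝ) (v : EuclideanSpace ℝ (Fin 2)) : Jrot (c • v) = c • Jrot v := by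
  ext i
  fin_cases i <;> simp [Jrot]

lemma Jrot_JTrot (v : EuclideanSpace ℝ (Fin 2)) : Jrot (JTrot v) = v := by
  ext i
  fin_cases i <;> simp [Jrot, JTrot]

lemma Jrot_kIso (b : ℝ) (x w : EuclideanSpace ℝ (Fin 2)) :
    Jrot (kIso b x w) = (b / (2 * Real.pi) / ‖x - w‖ ^ 2) • (x - w) := by
  rw [kIso, Jrot_smul, Jrot_JTrot]

lemma jDisk_eq (b : ℝ) {z : EuclideanSpace ℝ (Fin 2)} (h0 : z ≠ 0) (h1 : ‖z‖ ≠ 1) :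
    jDisk b z = (b ^ 2 / (2 * Real.pi) / (1 - ‖z‖ ^ 2)) • z := by
  set s := ‖z‖ ^ 2 with hs
  have hs0 : s ≠ 0 := pow_ne_zero 2 (norm_ne_zero_iff.2 h0)
  have hs1 : s - 1 ≠ 0 := by
    rwa [hs, sub_ne_zero, Ne, pow_eq_one_iff_of_nonneg (norm_nonneg z) two_ne_zero]
  have hsub : z - s⁻¹ • z = (1 - s⁻¹) • z := by rw [sub_smul, one_smul]
  have hnorm : ‖z - s⁻¹ • z‖ ^ 2 = (1 - s⁻¹) ^ 2 * s := by
    rw [hsub, norm_smul, mul_pow, Real.norm_eq_abs, sq_abs]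
  rw [jDisk, Jrot_kIso, hnorm, hsub, smul_smul, smul_smul]
  congr 1
  have hs1' : 1 - s ≠ 0 := by rwa [← neg_sub, neg_ne_zero]
  field_simp
  ring

lemma tendsto_div_one_sub_sq_nhdsLT_one :
    Tendsto (fun r : ℝ => r / (1 - r ^ 2)) (𝓝[<] 1) atTop := by
  have hr : Tendsto (fun r : ℝ => r) (𝓝[<] 1) (𝓝 1) := nhdsWithin_le_nhds
  have hgap : Tendsto (fun r : ℝ => 1 - r ^ 2) (𝓝[<] 1) (𝓝[>] 0) := by
    refine tendsto_nhdsWithin_iff.2 ⟨?_, ?_⟩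
    · simpa using (tendsto_const_nhds (x := (1 : ℝ))).sub (hr.pow 2)
    · filter_upwards [Ioo_mem_nhdsLT (show (0 : ℝ) < 1 by norm_num)] with r ⟨hr0, hr1⟩
      simp only [Set.mem_Ioi]
      nlinarith
  exact hr.pos_mul_atTop one_pos (tendsto_inv_nhdsGT_zero.comp hgap)

lemma norm_jDisk (b : ℝ) {z : EuclideanSpace ℝ (Fin 2)} (h0 : 0 < ‖z‖) (h1 : ‖z‖ < 1) :
    ‖jDisk b z‖ = b ^ 2 / (2 * Real.pi) * (‖z‖ / (1 - ‖z‖ ^ 2)) := by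
  have hgap : 0 < 1 - ‖z‖ ^ 2 := by nlinarith
  rw [jDisk_eq b (norm_pos_iff.1 h0) h1.ne, norm_smul, Real.norm_eq_abs,
    abs_of_nonneg (by positivity)]
  ring

/-- For a single dislocation in the unit disk, `j(z) = (b²/2π) z/(1−|z|²)`: the force is a
positive multiple of `z` (radially outward), and its magnitude blows up as `|z| → 1⁻`. -/
theorem jDisk_formula_and_blowup (b : ℝ) (hb : b ≠ 0) :
    (∀ z : EuclideanSpace ℝ (Fin 2), 0 < ‖z‖ → ‖z‖ < 1 →
      jDisk b z = (b ^ 2 / (2 * Real.pi) / (1 - ‖z‖ ^ 2)) • z ∧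
      ∃ c : ℝ, 0 < c ∧ jDisk b z = c • z) ∧
    (∀ zseq : ℕ → EuclideanSpace ℝ (Fin 2),
      (∀ n, 0 < ‖zseq n‖ ∧ ‖zseq n‖ < 1) →
      Tendsto (fun n => ‖zseq n‖) atTop (nhds 1) →
      Tendsto (fun n => ‖jDisk b (zseq n)‖) atTop atTop) := by
  have hcoeff : 0 < b ^ 2 / (2 * Real.pi) := by positivity
  constructor
  · intro z h0 h1
    have hformula := jDisk_eq b (norm_pos_iff.1 h0) h1.ne
    have hgap : 0 < 1 - ‖z‖ ^ 2 := by nlinarith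
    exact ⟨hformula, _, div_pos hcoeff hgap, hformula⟩
  · intro zseq hseq hlim
    have hlim' : Tendsto (fun n => ‖zseq n‖) atTop (𝓝[<] 1) :=
      tendsto_nhdsWithin_iff.2 ⟨hlim, Eventually.of_forall fun n => (hseq n).2⟩
    simp only [fun n => norm_jDisk b (hseq n).1 (hseq n).2]
    exact (tendsto_div_one_sub_sq_nhdsLT_one.comp hlim').const_mul_atTop hcoeff
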